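/- Let (Ω, 𝔽, ℙ) be a probability space, T a nonnegative real-valued random variable exponentially distributed with rate r > 0 (law with density u ↦ r e^{-ru} 1_{u ≥ 0}), and let 0 < λ < r. Then e^{λT} is integrable and E[e^{λT}] = r/(r-λ); moreover for any sequence (T_j)_{j ≥ 1} of independent random variables with T_j exponentially distributed with rate r_j, and any λ with 0 < λ < inf_j r_j and Σ_j 1/(r_j - λ) < ∞, the random variable exp(λ Σ_j T_j) is integrable with E[ exp( λ Σ_{j ≥ 1} T_j ) ] = Π_{j ≥ 1} r_j/(r_j - λ), and this infinite product is finite, bounded by exp( λ Σ_{j ≥ 1} 1/(r_j - λ) ). -/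

import Mathlib

/-!
Against `expMeasure r`, the density `r e^{-rx}` times `e^{λx}` is `r/(r-λ)` times the density of
`expMeasure (r-λ)`, whence `E[e^{λT}] = r/(r-λ)`. By independence `E[e^{λ S_n}]` is the partial
product `∏_{j<n} r_j/(r_j-λ)` for `S_n = ∑_{j<n} T_j`. Each factor is `1 + λ/(r_j-λ)`, so the
product converges and is at most `exp(λ ∑_j 1/(r_j-λ))`. Monotone convergence then keeps
`e^{λ S_n}` bounded almost surely, so `∑_j T_j` converges almost surely and its exponential moment
is the limit of the partial products.
-/

open MeasureTheory ProbabilityTheory Filter Topology Finset Real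

section MonotoneConvergence

variable {Ω : Type*} [MeasurableSpace Ω] {μ : Measure Ω} {f : ℕ → Ω → ℝ} {L : ℝ}

lemma lintegral_iSup_ofReal_eq_of_tendsto_integral (hf : ∀ n, Integrable (f n) μ)
    (hf0 : ∀ n, 0 ≤ᵐ[μ] f n) (hmono : ∀ᵐ ω ∂μ, Monotone fun n => f n ω)
    (hL : Tendsto (fun n => ∫ ω, f n ω ∂μ) atTop (𝓝 L)) :
    ∫⁻ ω, ⨆ n, ENNReal.ofReal (f n ω) ∂μ = ENNReal.ofReal L := by
  have hint_mono : Monotone fun n => ∫ ω, f n ω ∂μ := fun m n hmn =>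
    integral_mono_ae (hf m) (hf n) (hmono.mono fun ω h => h hmn)
  rw [lintegral_iSup' (fun n => (hf n).aemeasurable.ennreal_ofReal)
    (hmono.mono fun ω h m n hmn => ENNReal.ofReal_le_ofReal (h hmn))]
  simp_rw [← ofReal_integral_eq_lintegral_ofReal (hf _) (hf0 _)]
  exact iSup_eq_of_tendsto (fun m n hmn => ENNReal.ofReal_le_ofReal (hint_mono hmn))
    ((ENNReal.continuous_ofReal.tendsto L).comp hL)

lemma ae_bddAbove_of_tendsto_integral (hf : ∀ n, Integrable (f n) μ)
    (hf0 : ∀ n, 0 ≤ᵐ[μ] f n) (hmono : ∀ᵐ ω ∂μ, Monotone fun n => f n ω)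
    (hL : Tendsto (fun n => ∫ ω, f n ω ∂μ) atTop (𝓝 L)) :
    ∀ᵐ ω ∂μ, BddAbove (Set.range fun n => f n ω) := by
  have hfin := ae_lt_top' (AEMeasurable.iSup fun n => (hf n).aemeasurable.ennreal_ofReal)
    ((lintegral_iSup_ofReal_eq_of_tendsto_integral hf hf0 hmono hL).trans_ne
      ENNReal.ofReal_ne_top)
  filter_upwards [hfin] with ω hω
  refine ⟨(⨆ n, ENNReal.ofReal (f n ω)).toReal, ?_⟩
  rintro _ ⟨n, rfl⟩
  exact (ENNReal.ofReal_le_iff_le_toReal hω.ne).1 (le_iSup (fun n => ENNReal.ofReal (f n ω)) n)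

lemma integrable_and_integral_eq_of_tendsto_integral {F : Ω → ℝ} (hf : ∀ n, Integrable (f n) μ)
    (hf0 : ∀ n, 0 ≤ᵐ[μ] f n) (hmono : ∀ᵐ ω ∂μ, Monotone fun n => f n ω)
    (hL : Tendsto (fun n => ∫ ω, f n ω ∂μ) atTop (𝓝 L))
    (hF : ∀ᵐ ω ∂μ, Tendsto (fun n => f n ω) atTop (𝓝 (F ω))) :
    Integrable F μ ∧ ∫ ω, F ω ∂μ = L := by
  have hF_meas : AEStronglyMeasurable F μ :=
    aestronglyMeasurable_of_tendsto_ae atTop (fun n => (hf n).1) hF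
  have hF0 : 0 ≤ᵐ[μ] F := by
    filter_upwards [hF, ae_all_iff.2 hf0] with ω h h0 using ge_of_tendsto' h h0
  have hlint : ∫⁻ ω, ENNReal.ofReal (F ω) ∂μ = ENNReal.ofReal L := by
    rw [← lintegral_iSup_ofReal_eq_of_tendsto_integral hf hf0 hmono hL]
    refine lintegral_congr_ae ?_
    filter_upwards [hF, hmono] with ω h hm
    exact (iSup_eq_of_tendsto (fun m n hmn => ENNReal.ofReal_le_ofReal (hm hmn))
      ((ENNReal.continuous_ofReal.tendsto _).comp h)).symm
  have hL0 : 0 ≤ L := ge_of_tendsto' hL fun n => integral_nonneg_of_ae (hf0 n)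
  refine ⟨⟨hF_meas, ?_⟩, ?_⟩
  · rw [hasFiniteIntegral_iff_ofReal hF0, hlint]
    exact ENNReal.ofReal_lt_top
  · rw [integral_eq_lintegral_of_nonneg_ae hF0 hF_meas, hlint, ENNReal.toReal_ofReal hL0]

end MonotoneConvergence

section PartialSums

lemma monotone_exp_mul_sum_range {x : ℕ → ℝ} {c : ℝ} (hx : ∀ j, 0 ≤ x j) (hc : 0 ≤ c) :
    Monotone fun n => exp (c * ∑ j ∈ range n, x j) :=
  exp_monotone.comp <| (monotone_mul_left_of_nonneg hc).comp <|
    monotone_nat_of_le_succ fun n => by simpa [sum_range_succ] using hx n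

lemma summable_of_bddAbove_exp_mul_sum_range {x : ℕ → ℝ} {c : ℝ} (hx : ∀ j, 0 ≤ x j)
    (hc : 0 < c) (h : BddAbove (Set.range fun n => exp (c * ∑ j ∈ range n, x j))) :
    Summable x := by
  obtain ⟨M, hM⟩ := h
  refine summable_of_sum_range_le hx (c := M / c) fun n => ?_
  rw [le_div_iff₀' hc]
  linarith [add_one_le_exp (c * ∑ j ∈ range n, x j), hM ⟨n, rfl⟩]

variable {Ω : Type*} [MeasurableSpace Ω] {μ : Measure Ω}

theorem integrable_exp_mul_tsum_and_mgf_eq_of_tendsto {X : ℕ → Ω → ℝ} {c L : ℝ} (hc : 0 < c)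
    (hX0 : ∀ᵐ ω ∂μ, ∀ j, 0 ≤ X j ω)
    (hint : ∀ n, Integrable (fun ω => exp (c * (∑ j ∈ range n, X j) ω)) μ)
    (hL : Tendsto (fun n => mgf (∑ j ∈ range n, X j) μ c) atTop (𝓝 L)) :
    Integrable (fun ω => exp (c * ∑' j, X j ω)) μ ∧ mgf (fun ω => ∑' j, X j ω) μ c = L := by
  simp only [Finset.sum_apply] at hint
  simp only [mgf, Finset.sum_apply] at hL ⊢
  have hf0 : ∀ n, 0 ≤ᵐ[μ] fun ω => exp (c * ∑ j ∈ range n, X j ω) :=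
    fun n => ae_of_all _ fun ω => (exp_pos _).le
  have hmono : ∀ᵐ ω ∂μ, Monotone fun n => exp (c * ∑ j ∈ range n, X j ω) :=
    hX0.mono fun ω h => monotone_exp_mul_sum_range h hc.le
  have hsummable : ∀ᵐ ω ∂μ, Summable fun j => X j ω := by
    filter_upwards [hX0, ae_bddAbove_of_tendsto_integral
      (f := fun n ω => exp (c * ∑ j ∈ range n, X j ω)) hint hf0 hmono hL] with ω h0 hbdd
    exact summable_of_bddAbove_exp_mul_sum_range h0 hc hbdd
  refine integrable_and_integral_eq_of_tendsto_integral
    (f := fun n ω => exp (c * ∑ j ∈ range n, X j ω)) hint hf0 hmono hL ?_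
  filter_upwards [hsummable] with ω h
  exact (continuous_exp.tendsto _).comp (h.hasSum.tendsto_sum_nat.const_mul c)

end PartialSums

lemma Real.tprod_one_add_le_exp_tsum {ι : Type*} {a : ι → ℝ} (ha : ∀ i, 0 ≤ a i)
    (hs : Summable a) : ∏' i, (1 + a i) ≤ exp (∑' i, a i) :=
  le_of_tendsto' (Real.multipliable_one_add_of_summable hs).hasProd fun s =>
    (prod_one_add_le_exp_sum s ha).trans (exp_le_exp.2 (hs.sum_le_tsum s fun i _ => ha i))

section DivSub

lemma div_sub_eq_one_add_mul_one_div {r t : ℝ} (h : r ≠ t) :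
    r / (r - t) = 1 + t * (1 / (r - t)) := by
  field_simp [sub_ne_zero.2 h]
  ring

variable {ι : Type*} {r : ι → ℝ} {t : ℝ}

lemma multipliable_div_sub (ht : ∀ i, r i ≠ t) (hs : Summable fun i => 1 / (r i - t)) :
    Multipliable fun i => r i / (r i - t) := by
  simp only [div_sub_eq_one_add_mul_one_div (ht _)]
  exact Real.multipliable_one_add_of_summable (hs.mul_left t)

lemma tprod_div_sub_le_exp_tsum (ht0 : 0 ≤ t) (ht : ∀ i, t < r i)
    (hs : Summable fun i => 1 / (r i - t)) :
    ∏' i, r i / (r i - t) ≤ exp (t * ∑' i, 1 / (r i - t)) := by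
  simp only [div_sub_eq_one_add_mul_one_div (ht _).ne', ← tsum_mul_left]
  exact Real.tprod_one_add_le_exp_tsum
    (fun i => mul_nonneg ht0 (one_div_nonneg.2 (sub_pos.2 (ht i)).le)) (hs.mul_left t)

end DivSub

section Exponential

lemma measurable_exponentialPDF (r : ℝ) : Measurable (exponentialPDF r) :=
  (measurable_exponentialPDFReal r).ennreal_ofReal

lemma exponentialPDF_mul_ofReal_exp {r t : ℝ} (ht : t < r) (x : ℝ) :
    exponentialPDF r x * ENNReal.ofReal (exp (t * x))
      = ENNReal.ofReal (r / (r - t)) * exponentialPDF (r - t) x := by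
  rcases lt_or_ge x 0 with hx | hx
  · simp [exponentialPDF_of_neg hx]
  have hrt : 0 < r - t := sub_pos.2 ht
  rw [exponentialPDF_of_nonneg hx, exponentialPDF_of_nonneg hx,
    ← ENNReal.ofReal_mul' (exp_pos _).le, ← ENNReal.ofReal_mul' (by positivity)]
  congr 1
  rw [mul_assoc, ← exp_add]
  field_simp
  ring_nf

lemma lintegral_exp_mul_expMeasure {r t : ℝ} (ht : t < r) :
    ∫⁻ x, ENNReal.ofReal (exp (t * x)) ∂expMeasure r = ENNReal.ofReal (r / (r - t)) := by
  rw [show expMeasure r = volume.withDensity (exponentialPDF r) from rfl,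
    lintegral_withDensity_eq_lintegral_mul _ (measurable_exponentialPDF r)
      (measurable_const_mul t).exp.ennreal_ofReal]
  simp only [Pi.mul_apply, exponentialPDF_mul_ofReal_exp ht]
  rw [lintegral_const_mul _ (measurable_exponentialPDF _),
    lintegral_exponentialPDF_eq_one (sub_pos.2 ht), mul_one]

lemma integrable_exp_mul_expMeasure {r t : ℝ} (ht : t < r) :
    Integrable (fun x => exp (t * x)) (expMeasure r) := by
  refine ⟨(measurable_const_mul t).exp.aestronglyMeasurable, ?_⟩
  rw [hasFiniteIntegral_iff_ofReal (ae_of_all _ fun x => (exp_pos _).le),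
    lintegral_exp_mul_expMeasure ht]
  exact ENNReal.ofReal_lt_top

lemma mgf_id_expMeasure {r t : ℝ} (hr : 0 ≤ r) (ht : t < r) :
    mgf id (expMeasure r) t = r / (r - t) := by
  simp only [mgf, id]
  rw [integral_eq_lintegral_of_nonneg_ae (ae_of_all _ fun x => (exp_pos _).le)
    (measurable_const_mul t).exp.aestronglyMeasurable, lintegral_exp_mul_expMeasure ht]
  exact ENNReal.toReal_ofReal (div_nonneg hr (sub_pos.2 ht).le)

lemma ae_nonneg_expMeasure (r : ℝ) : ∀ᵐ x ∂expMeasure r, 0 ≤ x := by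
  rw [ae_iff, show expMeasure r = volume.withDensity (exponentialPDF r) from rfl]
  simp only [not_le]
  exact (withDensity_apply _ measurableSet_Iio).trans (lintegral_exponentialPDF_of_nonpos le_rfl)

variable {Ω : Type*} [MeasurableSpace Ω] {P : Measure Ω} {T : Ω → ℝ} {r t : ℝ}

lemma ae_nonneg_of_map_eq_expMeasure (hT : AEMeasurable T P) (hlaw : P.map T = expMeasure r) :
    ∀ᵐ ω ∂P, 0 ≤ T ω :=
  ae_of_ae_map hT (hlaw ▸ ae_nonneg_expMeasure r)

lemma integrable_exp_mul_of_map_eq_expMeasure (hT : AEMeasurable T P)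
    (hlaw : P.map T = expMeasure r) (ht : t < r) :
    Integrable (fun ω => exp (t * T ω)) P :=
  (integrable_map_measure (measurable_const_mul t).exp.aestronglyMeasurable hT).1
    (hlaw ▸ integrable_exp_mul_expMeasure ht)

lemma mgf_of_map_eq_expMeasure (hT : AEMeasurable T P) (hlaw : P.map T = expMeasure r)
    (hr : 0 ≤ r) (ht : t < r) : mgf T P t = r / (r - t) := by
  rw [← mgf_id_map hT, hlaw, mgf_id_expMeasure hr ht]

theorem ProbabilityTheory.iIndepFun.integrable_exp_mul_tsum_and_mgf_eq_tprod
    {T : ℕ → Ω → ℝ} {r : ℕ → ℝ} (hT : ∀ j, Measurable (T j)) (hindep : iIndepFun T P)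
    (hlaw : ∀ j, P.map (T j) = expMeasure (r j)) (ht0 : 0 < t) (ht : ∀ j, t < r j)
    (hs : Summable fun j => 1 / (r j - t)) :
    Integrable (fun ω => exp (t * ∑' j, T j ω)) P ∧
      mgf (fun ω => ∑' j, T j ω) P t = ∏' j, r j / (r j - t) := by
  have := hindep.isProbabilityMeasure
  have hpartial : ∀ n, mgf (∑ j ∈ range n, T j) P t = ∏ j ∈ range n, r j / (r j - t) := by
    intro n
    rw [hindep.mgf_sum hT]
    exact prod_congr rfl fun j _ =>
      mgf_of_map_eq_expMeasure (hT j).aemeasurable (hlaw j) (ht0.trans (ht j)).le (ht j)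
  refine integrable_exp_mul_tsum_and_mgf_eq_of_tendsto ht0
    (ae_all_iff.2 fun j => ae_nonneg_of_map_eq_expMeasure (hT j).aemeasurable (hlaw j))
    (fun n => hindep.integrable_exp_mul_sum hT fun j _ =>
      integrable_exp_mul_of_map_eq_expMeasure (hT j).aemeasurable (hlaw j) (ht j)) ?_
  simp only [hpartial]
  exact (multipliable_div_sub (fun j => (ht j).ne') hs).hasProd.tendsto_prod_nat

end Exponential

theorem exponential_mgf_and_product_general
    {Ω : Type*} [MeasurableSpace Ω] (P : Measure Ω)
    (T : Ω → ℝ) (r : ℝ) (hr : 0 < r)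
    (hTmeas : Measurable T) (hTlaw : Measure.map T P = expMeasure r)
    (lam : ℝ) (hlamr : lam < r) :
    (Integrable (fun ω => Real.exp (lam * T ω)) P ∧
      ∫ ω, Real.exp (lam * T ω) ∂P = r / (r - lam)) ∧
    ∀ (Ts : ℕ → Ω → ℝ) (rs : ℕ → ℝ) (lam' : ℝ),
      (∀ j, Measurable (Ts j)) →
      iIndepFun Ts P →
      (∀ j, 0 < rs j) →
      (∀ j, Measure.map (Ts j) P = expMeasure (rs j)) →
      0 < lam' → lam' < ⨅ j, rs j →
      Summable (fun j : ℕ => 1 / (rs j - lam')) →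
      (Integrable (fun ω => Real.exp (lam' * ∑' j : ℕ, Ts j ω)) P ∧
        ∫ ω, Real.exp (lam' * ∑' j : ℕ, Ts j ω) ∂P = ∏' j : ℕ, rs j / (rs j - lam') ∧
        Multipliable (fun j : ℕ => rs j / (rs j - lam')) ∧
        ∏' j : ℕ, rs j / (rs j - lam')
          ≤ Real.exp (lam' * ∑' j : ℕ, 1 / (rs j - lam'))) := by
  refine ⟨⟨integrable_exp_mul_of_map_eq_expMeasure hTmeas.aemeasurable hTlaw hlamr,
    mgf_of_map_eq_expMeasure hTmeas.aemeasurable hTlaw hr.le hlamr⟩, ?_⟩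
  intro Ts rs lam' hmeas hindep hrs hlaw hlam'0 hlam'inf hsum
  have hlt : ∀ j, lam' < rs j := fun j =>
    hlam'inf.trans_le (ciInf_le ⟨0, by rintro _ ⟨j, rfl⟩; exact (hrs j).le⟩ j)
  obtain ⟨hint, hmgf⟩ :=
    hindep.integrable_exp_mul_tsum_and_mgf_eq_tprod hmeas hlaw hlam'0 hlt hsum
  exact ⟨hint, hmgf, multipliable_div_sub (fun j => (hlt j).ne') hsum,
    tprod_div_sub_le_exp_tsum hlam'0.le hlt hsum⟩

/-- Moment generating function computations for exponential random variables:
if `T` is exponential with rate `r > 0` and `0 < λ < r`, then `E[e^{λT}] = r/(r-λ)`; moreover for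
independent exponentials `(T_j)` with rates `r_j`, `0 < λ < inf_j r_j` and
`Σ_j 1/(r_j - λ) < ∞`, one has `E[exp(λ Σ_j T_j)] = Π_j r_j/(r_j-λ)`, the infinite product being
finite and bounded by `exp(λ Σ_j 1/(r_j-λ))`. -/
theorem exponential_mgf_and_product
    {Ω : Type*} [MeasurableSpace Ω] (P : Measure Ω) [IsProbabilityMeasure P]
    (T : Ω → ℝ) (hTnn : ∀ ω, 0 ≤ T ω) (r : ℝ) (hr : 0 < r)
    (hTmeas : Measurable T) (hTlaw : Measure.map T P = expMeasure r)
    (lam : ℝ) (hlam0 : 0 < lam) (hlamr : lam < r) :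
    (Integrable (fun ω => Real.exp (lam * T ω)) P ∧
      ∫ ω, Real.exp (lam * T ω) ∂P = r / (r - lam)) ∧
    ∀ (Ts : ℕ → Ω → ℝ) (rs : ℕ → ℝ) (lam' : ℝ),
      (∀ j, Measurable (Ts j)) →
      iIndepFun Ts P →
      (∀ j, 0 < rs j) →
      (∀ j, Measure.map (Ts j) P = expMeasure (rs j)) →
      0 < lam' → lam' < ⨅ j, rs j →
      Summable (fun j : ℕ => 1 / (rs j - lam')) →
      (Integrable (fun ω => Real.exp (lam' * ∑' j : ℕ, Ts j ω)) P ∧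
        ∫ ω, Real.exp (lam' * ∑' j : ℕ, Ts j ω) ∂P = ∏' j : ℕ, rs j / (rs j - lam') ∧
        Multipliable (fun j : ℕ => rs j / (rs j - lam')) ∧
        ∏' j : ℕ, rs j / (rs j - lam')
          ≤ Real.exp (lam' * ∑' j : ℕ, 1 / (rs j - lam'))) :=
  exponential_mgf_and_product_general P T r hr hTmeas hTlaw lam hlamr
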